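/- Let f ≠ 0 and J be real numbers. If u : ℝ → ℝ is continuously differentiable, periodic with period 1, and satisfies (φ'(x) − f)·u(x) + u'(x) = −J for all x, then u(x) = (J/(1 − e^{−f})) · w₀(f,x) for all x. In particular, the 1-periodic steady state of the Fokker–Planck equation with unit mass on [0,1] is unique. -/

import Mathlib

open MeasureTheory intervalIntegral Asymptotics Filter

noncomputable def w0 (φ : ℝ → ℝ) (f x : ℝ) : ℝ :=
  ∫ s in (0:ℝ)..1, Real.exp (φ (x + s) - φ x - f * s)

noncomputable def M0 (φ : ℝ → ℝ) (f : ℝ) : ℝ := ∫ x in (0:ℝ)..1, w0 φ f x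

noncomputable def w1 (φ : ℝ → ℝ) (f x : ℝ) : ℝ :=
  ∫ s in (0:ℝ)..1, (w0 φ f (x + s)) ^ 2 * Real.exp (φ (x + s) - φ x - f * s)

noncomputable def M1 (φ : ℝ → ℝ) (f : ℝ) : ℝ := ∫ x in (0:ℝ)..1, w1 φ f x

/-!
Multiplying the equation `(φ' - f) u + u' = -J` by the integrating factor `e^{φ(t) - f t}` turns
it into `(u e^{φ - f t})' = -J e^{φ - f t}`. Integrating over one period `[x, x + 1]`, and using that
periodicity of `u` and `φ` gives `g (x + 1) = e^{-f} g x` for `g = u e^{φ - f t}`, yields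
`(1 - e^{-f}) u(x) e^{φ(x) - f x} = J ∫_x^{x+1} e^{φ(t) - f t} dt = J e^{φ(x) - f x} w₀(f, x)`.
Since `f ≠ 0`, every periodic solution is thus a multiple of `w₀(f, ·)`, and the multiple is pinned
down by the mass condition.
-/

theorem w0_eq_exp_mul_integral (φ : ℝ → ℝ) (f x : ℝ) :
    w0 φ f x = Real.exp (f * x - φ x) * ∫ t in x..x + 1, Real.exp (φ t - f * t) := by
  have hsplit : ∀ s, Real.exp (φ (x + s) - φ x - f * s)
      = Real.exp (f * x - φ x) * Real.exp (φ (x + s) - f * (x + s)) := by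
    intro s
    rw [← Real.exp_add]
    ring_nf
  rw [w0, integral_congr fun s _ => hsplit s, intervalIntegral.integral_const_mul,
    intervalIntegral.integral_comp_add_left (fun t => Real.exp (φ t - f * t)) x, add_zero]

theorem hasDerivAt_mul_exp_of_ode {φ u : ℝ → ℝ} {f J t : ℝ} (hφ : DifferentiableAt ℝ φ t)
    (hu : DifferentiableAt ℝ u t) (hode : (deriv φ t - f) * u t + deriv u t = -J) :
    HasDerivAt (fun s => u s * Real.exp (φ s - f * s)) (-J * Real.exp (φ t - f * t)) t := by
  have hexp : HasDerivAt (fun s => Real.exp (φ s - f * s))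
      (Real.exp (φ t - f * t) * (deriv φ t - f)) t :=
    (hφ.hasDerivAt.sub ((hasDerivAt_id t).const_mul f |>.congr_deriv (mul_one f))).exp
  refine (hu.hasDerivAt.mul hexp).congr_deriv ?_
  linear_combination Real.exp (φ t - f * t) * hode

theorem one_sub_exp_mul_eq_of_ode {φ u : ℝ → ℝ} {f J : ℝ} (hφ : Differentiable ℝ φ)
    (hu : Differentiable ℝ u) (hφper : ∀ x, φ (x + 1) = φ x) (huper : ∀ x, u (x + 1) = u x)
    (hode : ∀ x, (deriv φ x - f) * u x + deriv u x = -J) (x : ℝ) :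
    (1 - Real.exp (-f)) * (u x * Real.exp (φ x - f * x))
      = J * ∫ t in x..x + 1, Real.exp (φ t - f * t) := by
  have hftc : ∫ t in x..x + 1, -J * Real.exp (φ t - f * t)
      = u (x + 1) * Real.exp (φ (x + 1) - f * (x + 1)) - u x * Real.exp (φ x - f * x) :=
    integral_eq_sub_of_hasDerivAt (fun t _ => hasDerivAt_mul_exp_of_ode (hφ t) (hu t) (hode t))
      ((continuous_const.mul (hφ.continuous.sub (continuous_const_mul f)).rexp).intervalIntegrable
        _ _)
  have hshift : Real.exp (φ (x + 1) - f * (x + 1)) = Real.exp (φ x - f * x) * Real.exp (-f) := by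
    rw [hφper, ← Real.exp_add]
    ring_nf
  rw [intervalIntegral.integral_const_mul, huper, hshift] at hftc
  linear_combination hftc

theorem eq_mul_w0_of_ode {φ u : ℝ → ℝ} {f J : ℝ} (hφ : Differentiable ℝ φ)
    (hu : Differentiable ℝ u) (hφper : ∀ x, φ (x + 1) = φ x) (huper : ∀ x, u (x + 1) = u x)
    (hf : f ≠ 0) (hode : ∀ x, (deriv φ x - f) * u x + deriv u x = -J) (x : ℝ) :
    u x = J / (1 - Real.exp (-f)) * w0 φ f x := by
  have hne : 1 - Real.exp (-f) ≠ 0 := by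
    rw [sub_ne_zero, ne_comm, Ne, Real.exp_eq_one_iff, neg_eq_zero]
    exact hf
  have hinv : Real.exp (φ x - f * x) * Real.exp (f * x - φ x) = 1 := by
    rw [← Real.exp_add, sub_add_sub_cancel, sub_self, Real.exp_zero]
  have hperiod := one_sub_exp_mul_eq_of_ode hφ hu hφper huper hode x
  rw [w0_eq_exp_mul_integral]
  field_simp
  linear_combination Real.exp (f * x - φ x) * hperiod - u x * (1 - Real.exp (-f)) * hinv

theorem eq_of_eq_mul_of_integral_eq_one {u v w : ℝ → ℝ} {a b : ℝ} (hu : ∀ x, u x = a * w x)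
    (hv : ∀ x, v x = b * w x) (hu1 : ∫ x in (0:ℝ)..1, u x = 1) (hv1 : ∫ x in (0:ℝ)..1, v x = 1)
    (x : ℝ) : v x = u x := by
  simp_rw [hu, intervalIntegral.integral_const_mul] at hu1
  simp_rw [hv, intervalIntegral.integral_const_mul] at hv1
  have hab : a = b := mul_right_cancel₀ (right_ne_zero_of_mul_eq_one hu1) (hu1.trans hv1.symm)
  rw [hu, hv, hab]

theorem stmt_2 (φ : ℝ → ℝ) (hφ : ContDiff ℝ 1 φ) (hφper : ∀ x, φ (x + 1) = φ x)
    (f : ℝ) (hf : f ≠ 0) (J : ℝ) (u : ℝ → ℝ) (hu : ContDiff ℝ 1 u)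
    (huper : ∀ x, u (x + 1) = u x)
    (hode : ∀ x, (deriv φ x - f) * u x + deriv u x = -J) :
    (∀ x, u x = (J / (1 - Real.exp (-f))) * w0 φ f x) ∧
    (∀ (v : ℝ → ℝ) (J' : ℝ), ContDiff ℝ 1 v → (∀ x, v (x + 1) = v x) →
      (∀ x, (deriv φ x - f) * v x + deriv v x = -J') →
      (∫ x in (0:ℝ)..1, u x) = 1 → (∫ x in (0:ℝ)..1, v x) = 1 →
      ∀ x, v x = u x) := by
  have hφd := hφ.differentiable one_ne_zero
  have hu_eq := eq_mul_w0_of_ode hφd (hu.differentiable one_ne_zero) hφper huper hf hode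
  refine ⟨hu_eq, fun v J' hv hvper hvode hu1 hv1 => ?_⟩
  exact eq_of_eq_mul_of_integral_eq_one hu_eq
    (eq_mul_w0_of_ode hφd (hv.differentiable one_ne_zero) hφper hvper hf hvode) hu1 hv1
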